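/- arXiv:1310.8646 — 3 statements merged into one kernel-verified Lean document; each statement's English description precedes it below -/
import Mathlib

section
/- A reduced word in the graph product G(Γ) represents the identity element if and only if it is the empty word. -/
/-!
A reduced word is in normal form: none of its letters is trivial in its vertex group, and no letter
`s ^ e` can be shuffled, past letters adjacent to `s`, onto another letter `s ^ f`. The graph
product acts on normal words modulo shuffling commuting letters and changing exponents within the
vertex groups: `s ^ e` merges into the first letter `s ^ f` it can reach, and is prepended if there
is none. Acting on the empty word, the element represented by a normal word `w` yields the class
of `w`. So if that element is trivial, `w` is equivalent to the empty word, hence empty since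
the equivalence preserves length.
-/

open Pointwise

/-- Relations of the graph product of cyclic groups: `s ^ n = 1` whenever the label of
`s` is the finite value `n`, and commutators of generators joined by an edge. -/
def graphProductRels {V : Type*} (Γ : SimpleGraph V) (c : V → ℕ∞) : Set (FreeGroup V) :=
  {r | (∃ (s : V) (n : ℕ), c s = (n : ℕ∞) ∧ r = FreeGroup.of s ^ n) ∨
       (∃ s t : V, Γ.Adj s t ∧
         r = FreeGroup.of s * FreeGroup.of t * (FreeGroup.of s)⁻¹ * (FreeGroup.of t)⁻¹)}

/-- The graph product of cyclic groups associated to a graph `Γ` with labeling `c`. -/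
abbrev GraphProduct {V : Type*} (Γ : SimpleGraph V) (c : V → ℕ∞) : Type _ :=
  PresentedGroup (graphProductRels Γ c)

/-- The generator of `GraphProduct Γ c` corresponding to a vertex `s`. -/
def gpGen {V : Type*} (Γ : SimpleGraph V) (c : V → ℕ∞) (s : V) : GraphProduct Γ c :=
  PresentedGroup.of s

/-- The element of the graph product represented by a word `(s₁^{e₁}, …, s_k^{e_k})`. -/
def wordProd {V : Type*} (Γ : SimpleGraph V) (c : V → ℕ∞) (w : List (V × ℤ)) :
    GraphProduct Γ c :=
  (w.map (fun p => gpGen Γ c p.1 ^ p.2)).prod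

/-- The elementary moves on words: deleting a letter that is trivial in the vertex group,
merging consecutive powers of the same generator, and swapping consecutive letters whose
generators are joined by an edge. -/
inductive GPMove {V : Type*} (Γ : SimpleGraph V) (c : V → ℕ∞) :
    List (V × ℤ) → List (V × ℤ) → Prop
  | del (w₁ w₂ : List (V × ℤ)) (s : V) (e : ℤ) (h : gpGen Γ c s ^ e = 1) :
      GPMove Γ c (w₁ ++ (s, e) :: w₂) (w₁ ++ w₂)
  | merge (w₁ w₂ : List (V × ℤ)) (s : V) (a b : ℤ) :
      GPMove Γ c (w₁ ++ (s, a) :: (s, b) :: w₂) (w₁ ++ (s, a + b) :: w₂)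
  | swap (w₁ w₂ : List (V × ℤ)) (s t : V) (a b : ℤ) (h : Γ.Adj s t) :
      GPMove Γ c (w₁ ++ (s, a) :: (t, b) :: w₂) (w₁ ++ (t, b) :: (s, a) :: w₂)

/-- A word is reduced if it cannot be shortened by any sequence of elementary moves. -/
def GPReduced {V : Type*} (Γ : SimpleGraph V) (c : V → ℕ∞) (w : List (V × ℤ)) : Prop :=
  ∀ w', Relation.ReflTransGen (GPMove Γ c) w w' → w.length ≤ w'.length

/-- The length of a word: infinite-order letters count with the absolute value of their
exponent, finite-order letters count once. -/
def wordLen {V : Type*} (c : V → ℕ∞) (w : List (V × ℤ)) : ℕ :=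
  (w.map (fun p => if c p.1 = ⊤ then p.2.natAbs else 1)).sum

/-- The length of a group element: the minimum of the lengths of words representing it. -/
noncomputable def elLen {V : Type*} (Γ : SimpleGraph V) (c : V → ℕ∞)
    (g : GraphProduct Γ c) : ℕ :=
  sInf {n | ∃ w, wordProd Γ c w = g ∧ wordLen c w = n}

/-- `g` ends with the generator `s`. -/
def EndsWith {V : Type*} (Γ : SimpleGraph V) (c : V → ℕ∞) (g : GraphProduct Γ c)
    (s : V) : Prop :=
  ∃ (w : List (V × ℤ)) (e : ℤ), GPReduced Γ c (w ++ [(s, e)]) ∧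
    wordProd Γ c (w ++ [(s, e)]) = g

open Relation

namespace GraphProduct

variable {V : Type*}

/-- The exponent of `s ^ e` in the vertex group: for `c s = ⊤` (and for `c s = 0`, whose relation
`s ^ 0 = 1` is empty) we have `(c s).toNat = 0` and `ZMod 0 = ℤ`. -/
abbrev residue (c : V → ℕ∞) (s : V) (e : ℤ) : ZMod (c s).toNat := e

section Presentation

variable (Γ : SimpleGraph V) (c : V → ℕ∞)

lemma gpGen_pow_toNat (s : V) : gpGen Γ c s ^ (c s).toNat = 1 := by
  cases hs : c s with
  | top => simp
  | coe n =>
    rw [ENat.toNat_natCast, gpGen, PresentedGroup.of, ← map_pow]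
    exact PresentedGroup.one_of_mem (Or.inl ⟨s, n, hs, rfl⟩)

lemma gpGen_zpow_eq_one {s : V} {e : ℤ} (h : residue c s e = 0) : gpGen Γ c s ^ e = 1 := by
  obtain ⟨k, rfl⟩ := (ZMod.intCast_zmod_eq_zero_iff_dvd _ _).mp h
  rw [zpow_mul, zpow_natCast, gpGen_pow_toNat, one_zpow]

lemma wordProd_cons (s : V) (e : ℤ) (w : List (V × ℤ)) :
    wordProd Γ c ((s, e) :: w) = gpGen Γ c s ^ e * wordProd Γ c w := by
  simp [wordProd]

end Presentation

section NormalForm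

variable (Γ : SimpleGraph V) (c : V → ℕ∞)

/-- No letter `s` of the word can be shuffled to its front. -/
def Blocked (s : V) : List (V × ℤ) → Prop
  | [] => True
  | (t, _) :: u => t ≠ s ∧ (Γ.Adj s t → Blocked s u)

def IsNormal : List (V × ℤ) → Prop
  | [] => True
  | (s, e) :: u => residue c s e ≠ 0 ∧ Blocked Γ s u ∧ IsNormal u

inductive Step : List (V × ℤ) → List (V × ℤ) → Prop
  | exp (s : V) {e e' : ℤ} (u : List (V × ℤ)) (h : residue c s e = residue c s e') :
      Step ((s, e) :: u) ((s, e') :: u)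
  | swap {s t : V} (p q : ℤ) (u : List (V × ℤ)) (h : Γ.Adj s t) :
      Step ((s, p) :: (t, q) :: u) ((t, q) :: (s, p) :: u)
  | cons (x : V × ℤ) {u v : List (V × ℤ)} : Step u v → Step (x :: u) (x :: v)

def prepend (s : V) (e : ℤ) (u : List (V × ℤ)) : List (V × ℤ) :=
  if residue c s e = 0 then u else (s, e) :: u

def mulLetter [DecidableEq V] [DecidableRel Γ.Adj] (s : V) (e : ℤ) :
    List (V × ℤ) → List (V × ℤ)
  | [] => prepend c s e []
  | (t, f) :: u =>
    if t = s then prepend c s (e + f) u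
    else if Γ.Adj s t then (t, f) :: mulLetter s e u
    else prepend c s e ((t, f) :: u)

end NormalForm

variable {Γ : SimpleGraph V} {c : V → ℕ∞}

local infix:50 " ≋ " => EqvGen (Step Γ c)

lemma eqvGen_step_cons (x : V × ℤ) {u v : List (V × ℤ)} (h : u ≋ v) :
    x :: u ≋ x :: v := by
  induction h with
  | rel _ _ h => exact .rel _ _ (.cons x h)
  | refl => exact .refl _
  | symm _ _ _ ih => exact ih.symm
  | trans _ _ _ _ _ ih ih' => exact ih.trans _ _ _ ih'

lemma Step.length_eq {u v : List (V × ℤ)} (h : Step Γ c u v) : u.length = v.length := by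
  induction h <;> simp [*]

lemma eqvGen_step_length_eq {u v : List (V × ℤ)} (h : u ≋ v) :
    u.length = v.length := by
  induction h with
  | rel _ _ h => exact h.length_eq
  | refl => rfl
  | symm _ _ _ ih => exact ih.symm
  | trans _ _ _ _ _ ih ih' => exact ih.trans ih'

lemma prepend_congr {s : V} {e e' : ℤ} (h : residue c s e = residue c s e')
    (u : List (V × ℤ)) : prepend c s e u ≋ prepend c s e' u := by
  unfold prepend
  rw [h]
  split_ifs
  · exact .refl _
  · exact .rel _ _ (.exp s u h)

lemma prepend_eqvGen (s : V) (e : ℤ) {u v : List (V × ℤ)} (h : u ≋ v) :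
    prepend c s e u ≋ prepend c s e v := by
  unfold prepend
  split_ifs
  · exact h
  · exact eqvGen_step_cons _ h

lemma cons_prepend_of_adj {s t : V} (h : Γ.Adj s t) (e f : ℤ) (u : List (V × ℤ)) :
    (t, f) :: prepend c s e u ≋ prepend c s e ((t, f) :: u) := by
  unfold prepend
  split_ifs
  · exact .refl _
  · exact .rel _ _ (.swap f e u h.symm)

lemma prepend_comm_of_adj {s t : V} (h : Γ.Adj s t) (e f : ℤ) (u : List (V × ℤ)) :
    prepend c s e (prepend c t f u) ≋ prepend c t f (prepend c s e u) := by
  unfold prepend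
  split_ifs
  all_goals first | exact .refl _ | exact .rel _ _ (.swap e f u h)

lemma blocked_prepend_of_adj {s t : V} (h : Γ.Adj s t) (e : ℤ) {u : List (V × ℤ)}
    (hb : Blocked Γ t u) : Blocked Γ t (prepend c s e u) := by
  unfold prepend
  split_ifs
  · exact hb
  · exact ⟨h.ne, fun _ => hb⟩

lemma isNormal_prepend {s : V} (e : ℤ) {u : List (V × ℤ)} (hb : Blocked Γ s u)
    (hu : IsNormal Γ c u) : IsNormal Γ c (prepend c s e u) := by
  unfold prepend
  split_ifs with he
  · exact hu
  · exact ⟨he, hb, hu⟩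

section MulLetter

variable [DecidableEq V] [DecidableRel Γ.Adj]

lemma mulLetter_nil (s : V) (e : ℤ) : mulLetter Γ c s e [] = prepend c s e [] := by
  simp [mulLetter]

lemma mulLetter_cons_self (s : V) (e f : ℤ) (u : List (V × ℤ)) :
    mulLetter Γ c s e ((s, f) :: u) = prepend c s (e + f) u := by
  simp [mulLetter]

lemma mulLetter_cons_of_adj {s t : V} (h : Γ.Adj s t) (e f : ℤ) (u : List (V × ℤ)) :
    mulLetter Γ c s e ((t, f) :: u) = (t, f) :: mulLetter Γ c s e u := by
  simp [mulLetter, h.ne', h]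

lemma mulLetter_cons_of_not_adj {s t : V} (hts : t ≠ s) (h : ¬Γ.Adj s t) (e f : ℤ)
    (u : List (V × ℤ)) : mulLetter Γ c s e ((t, f) :: u) = prepend c s e ((t, f) :: u) := by
  simp [mulLetter, hts, h]

lemma mulLetter_prepend_of_adj {s t : V} (h : Γ.Adj s t) (e f : ℤ) (u : List (V × ℤ)) :
    mulLetter Γ c s e (prepend c t f u) = prepend c t f (mulLetter Γ c s e u) := by
  unfold prepend
  split_ifs
  · rfl
  · exact mulLetter_cons_of_adj h e f u

lemma mulLetter_eqvGen_prepend {s : V} (e : ℤ) {u : List (V × ℤ)} (hb : Blocked Γ s u) :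
    mulLetter Γ c s e u ≋ prepend c s e u := by
  induction u with
  | nil => exact .refl _
  | cons x u ih =>
    obtain ⟨t, f⟩ := x
    obtain ⟨hts, hb⟩ := hb
    by_cases h : Γ.Adj s t
    · rw [mulLetter_cons_of_adj h]
      exact (eqvGen_step_cons _ (ih (hb h))).trans _ _ _ (cons_prepend_of_adj h e f u)
    · rw [mulLetter_cons_of_not_adj hts h]
      exact .refl _

lemma mulLetter_prepend_of_blocked {s : V} (e f : ℤ) {u : List (V × ℤ)} (hb : Blocked Γ s u) :
    mulLetter Γ c s e (prepend c s f u) ≋ prepend c s (e + f) u := by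
  by_cases hf : residue c s f = 0
  · rw [prepend, if_pos hf]
    exact (mulLetter_eqvGen_prepend e hb).trans _ _ _ (prepend_congr (by push_cast; simp [hf]) u)
  · rw [prepend, if_neg hf, mulLetter_cons_self]
    exact .refl _

lemma IsNormal.exists_blocked_eqvGen_prepend {u : List (V × ℤ)} (hu : IsNormal Γ c u) (s : V) :
    ∃ g u', Blocked Γ s u' ∧ u ≋ prepend c s g u' := by
  induction u with
  | nil => exact ⟨0, [], trivial, by simp [prepend]; exact .refl _⟩
  | cons x u ih =>
    obtain ⟨t, f⟩ := x
    obtain ⟨hf, hbt, hu⟩ := hu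
    by_cases hts : t = s
    · subst hts
      exact ⟨f, u, hbt, by rw [prepend, if_neg hf]; exact .refl _⟩
    by_cases hst : Γ.Adj s t
    · obtain ⟨g, u', hb, hu'⟩ := ih hu
      exact ⟨g, (t, f) :: u', ⟨hts, fun _ => hb⟩,
        (eqvGen_step_cons _ hu').trans _ _ _ (cons_prepend_of_adj hst g f u')⟩
    · exact ⟨0, (t, f) :: u, ⟨hts, fun h => absurd h hst⟩, by simp [prepend]; exact .refl _⟩

lemma blocked_mulLetter_of_adj {s t : V} (h : Γ.Adj s t) (e : ℤ) {u : List (V × ℤ)}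
    (hb : Blocked Γ t u) : Blocked Γ t (mulLetter Γ c s e u) := by
  induction u with
  | nil => exact blocked_prepend_of_adj h e hb
  | cons x u ih =>
    obtain ⟨r, g⟩ := x
    obtain ⟨hrt, hb⟩ := hb
    by_cases hrs : r = s
    · subst hrs
      rw [mulLetter_cons_self]
      exact blocked_prepend_of_adj h _ (hb h.symm)
    by_cases hsr : Γ.Adj s r
    · rw [mulLetter_cons_of_adj hsr]
      exact ⟨hrt, fun htr => ih (hb htr)⟩
    · rw [mulLetter_cons_of_not_adj hrs hsr]
      exact blocked_prepend_of_adj h e ⟨hrt, hb⟩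

lemma isNormal_mulLetter (s : V) (e : ℤ) {u : List (V × ℤ)} (hu : IsNormal Γ c u) :
    IsNormal Γ c (mulLetter Γ c s e u) := by
  induction u with
  | nil => exact isNormal_prepend e trivial trivial
  | cons x u ih =>
    obtain ⟨t, f⟩ := x
    obtain ⟨hf, hbt, hu⟩ := hu
    by_cases hts : t = s
    · subst hts
      rw [mulLetter_cons_self]
      exact isNormal_prepend _ hbt hu
    by_cases hst : Γ.Adj s t
    · rw [mulLetter_cons_of_adj hst]
      exact ⟨hf, blocked_mulLetter_of_adj hst e hbt, ih hu⟩
    · rw [mulLetter_cons_of_not_adj hts hst]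
      exact isNormal_prepend e ⟨hts, fun h => absurd h hst⟩ ⟨hf, hbt, hu⟩

lemma mulLetter_swap_of_eq {s t : V} (h : Γ.Adj s t) (e p q : ℤ) (u : List (V × ℤ)) :
    mulLetter Γ c s e ((s, p) :: (t, q) :: u) ≋ mulLetter Γ c s e ((t, q) :: (s, p) :: u) := by
  rw [mulLetter_cons_self, mulLetter_cons_of_adj h, mulLetter_cons_self]
  exact (cons_prepend_of_adj h _ q u).symm

lemma mulLetter_swap_of_adj {s x y : V} (h : Γ.Adj x y) (hy : y ≠ s)
    (hsx : Γ.Adj s x) (e p q : ℤ) (u : List (V × ℤ)) :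
    mulLetter Γ c s e ((x, p) :: (y, q) :: u) ≋ mulLetter Γ c s e ((y, q) :: (x, p) :: u) := by
  rw [mulLetter_cons_of_adj hsx]
  by_cases hsy : Γ.Adj s y
  · rw [mulLetter_cons_of_adj hsy, mulLetter_cons_of_adj hsy, mulLetter_cons_of_adj hsx]
    exact .rel _ _ (.swap p q _ h)
  · rw [mulLetter_cons_of_not_adj hy hsy, mulLetter_cons_of_not_adj hy hsy]
    exact (cons_prepend_of_adj hsx e p _).trans _ _ _
      (prepend_eqvGen s e (.rel _ _ (.swap p q u h)))

lemma mulLetter_swap {x y : V} (h : Γ.Adj x y) (s : V) (e p q : ℤ) (u : List (V × ℤ)) :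
    mulLetter Γ c s e ((x, p) :: (y, q) :: u) ≋ mulLetter Γ c s e ((y, q) :: (x, p) :: u) := by
  by_cases hx : x = s
  · subst hx
    exact mulLetter_swap_of_eq h e p q u
  by_cases hy : y = s
  · subst hy
    exact (mulLetter_swap_of_eq h.symm e q p u).symm
  by_cases hsx : Γ.Adj s x
  · exact mulLetter_swap_of_adj h hy hsx e p q u
  by_cases hsy : Γ.Adj s y
  · exact (mulLetter_swap_of_adj h.symm hx hsy e q p u).symm
  rw [mulLetter_cons_of_not_adj hx hsx, mulLetter_cons_of_not_adj hy hsy]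
  exact prepend_eqvGen s e (.rel _ _ (.swap p q u h))

lemma mulLetter_step (s : V) (e : ℤ) {u v : List (V × ℤ)} (h : Step Γ c u v) :
    mulLetter Γ c s e u ≋ mulLetter Γ c s e v := by
  induction h with
  | exp r u h =>
    by_cases hr : r = s
    · subst hr
      rw [mulLetter_cons_self, mulLetter_cons_self]
      exact prepend_congr (by simp only [residue, Int.cast_add] at h ⊢; rw [h]) u
    by_cases hsr : Γ.Adj s r
    · rw [mulLetter_cons_of_adj hsr, mulLetter_cons_of_adj hsr]
      exact .rel _ _ (.exp r _ h)
    · rw [mulLetter_cons_of_not_adj hr hsr, mulLetter_cons_of_not_adj hr hsr]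
      exact prepend_eqvGen s e (.rel _ _ (.exp r u h))
  | swap p q u h => exact mulLetter_swap h s e p q u
  | cons x h ih =>
    obtain ⟨r, g⟩ := x
    by_cases hr : r = s
    · subst hr
      rw [mulLetter_cons_self, mulLetter_cons_self]
      exact prepend_eqvGen _ _ (.rel _ _ h)
    by_cases hsr : Γ.Adj s r
    · rw [mulLetter_cons_of_adj hsr, mulLetter_cons_of_adj hsr]
      exact eqvGen_step_cons _ ih
    · rw [mulLetter_cons_of_not_adj hr hsr, mulLetter_cons_of_not_adj hr hsr]
      exact prepend_eqvGen s e (.rel _ _ (.cons _ h))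

lemma mulLetter_eqvGen (s : V) (e : ℤ) {u v : List (V × ℤ)} (h : u ≋ v) :
    mulLetter Γ c s e u ≋ mulLetter Γ c s e v := by
  induction h with
  | rel _ _ h => exact mulLetter_step s e h
  | refl => exact .refl _
  | symm _ _ _ ih => exact ih.symm
  | trans _ _ _ _ _ ih ih' => exact ih.trans _ _ _ ih'

lemma mulLetter_mulLetter (s : V) (e f : ℤ) {u : List (V × ℤ)} (hu : IsNormal Γ c u) :
    mulLetter Γ c s e (mulLetter Γ c s f u) ≋ mulLetter Γ c s (e + f) u := by
  obtain ⟨g, u', hb, hu'⟩ := hu.exists_blocked_eqvGen_prepend s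
  calc mulLetter Γ c s e (mulLetter Γ c s f u)
      ≋ mulLetter Γ c s e (mulLetter Γ c s f (prepend c s g u')) :=
        mulLetter_eqvGen s e (mulLetter_eqvGen s f hu')
    _ ≋ mulLetter Γ c s e (prepend c s (f + g) u') :=
        mulLetter_eqvGen s e (mulLetter_prepend_of_blocked f g hb)
    _ ≋ prepend c s (e + f + g) u' := by
        rw [add_assoc]; exact mulLetter_prepend_of_blocked e (f + g) hb
    _ ≋ mulLetter Γ c s (e + f) (prepend c s g u') :=
        (mulLetter_prepend_of_blocked (e + f) g hb).symm
    _ ≋ mulLetter Γ c s (e + f) u := (mulLetter_eqvGen s (e + f) hu').symm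

lemma mulLetter_of_residue_eq_zero {s : V} {e : ℤ} (he : residue c s e = 0) {u : List (V × ℤ)}
    (hu : IsNormal Γ c u) : mulLetter Γ c s e u ≋ u := by
  obtain ⟨g, u', hb, hu'⟩ := hu.exists_blocked_eqvGen_prepend s
  calc mulLetter Γ c s e u ≋ mulLetter Γ c s e (prepend c s g u') :=
        mulLetter_eqvGen s e hu'
    _ ≋ prepend c s (e + g) u' := mulLetter_prepend_of_blocked e g hb
    _ ≋ prepend c s g u' := prepend_congr (by simp [he]) u'
    _ ≋ u := hu'.symm

lemma mulLetter_comm_of_adj {s t : V} (h : Γ.Adj s t) (e f : ℤ) (u : List (V × ℤ)) :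
    mulLetter Γ c s e (mulLetter Γ c t f u) ≋ mulLetter Γ c t f (mulLetter Γ c s e u) := by
  induction u with
  | nil =>
    rw [mulLetter_nil, mulLetter_nil, mulLetter_prepend_of_adj h, mulLetter_prepend_of_adj h.symm,
      mulLetter_nil, mulLetter_nil]
    exact (prepend_comm_of_adj h e f []).symm
  | cons x u ih =>
    obtain ⟨r, g⟩ := x
    by_cases hrs : r = s
    · subst hrs
      rw [mulLetter_cons_of_adj h.symm, mulLetter_cons_self, mulLetter_cons_self,
        mulLetter_prepend_of_adj h.symm]
      exact .refl _
    by_cases hrt : r = t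
    · subst hrt
      rw [mulLetter_cons_self, mulLetter_cons_of_adj h, mulLetter_prepend_of_adj h,
        mulLetter_cons_self]
      exact .refl _
    by_cases hsr : Γ.Adj s r <;> by_cases htr : Γ.Adj t r
    · rw [mulLetter_cons_of_adj htr, mulLetter_cons_of_adj hsr, mulLetter_cons_of_adj hsr,
        mulLetter_cons_of_adj htr]
      exact eqvGen_step_cons _ ih
    · rw [mulLetter_cons_of_not_adj hrt htr, mulLetter_prepend_of_adj h, mulLetter_cons_of_adj hsr,
        mulLetter_cons_of_not_adj hrt htr]
      exact .refl _
    · rw [mulLetter_cons_of_adj htr, mulLetter_cons_of_not_adj hrs hsr,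
        mulLetter_cons_of_not_adj hrs hsr, mulLetter_prepend_of_adj h.symm,
        mulLetter_cons_of_adj htr]
      exact .refl _
    · rw [mulLetter_cons_of_not_adj hrt htr, mulLetter_prepend_of_adj h,
        mulLetter_cons_of_not_adj hrs hsr, mulLetter_prepend_of_adj h.symm,
        mulLetter_cons_of_not_adj hrt htr]
      exact (prepend_comm_of_adj h e f _).symm

end MulLetter

section Action

variable (Γ c)

abbrev NormalWord : Type _ := {u : List (V × ℤ) // IsNormal Γ c u}

instance NormalWord.setoid : Setoid (NormalWord Γ c) :=
  (EqvGen.setoid (Step Γ c)).comap Subtype.val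

abbrev NormalClass : Type _ := Quotient (NormalWord.setoid Γ c)

variable [DecidableEq V] [DecidableRel Γ.Adj]

def mulClass (s : V) (e : ℤ) : NormalClass Γ c → NormalClass Γ c :=
  Quotient.map (fun u => ⟨mulLetter Γ c s e u.1, isNormal_mulLetter s e u.2⟩)
    (fun _ _ h => mulLetter_eqvGen s e h)

variable {Γ c}

lemma mulClass_mulClass (s : V) (e f : ℤ) (q : NormalClass Γ c) :
    mulClass Γ c s e (mulClass Γ c s f q) = mulClass Γ c s (e + f) q := by
  induction q using Quotient.inductionOn with
  | h u => exact Quotient.sound (mulLetter_mulLetter s e f u.2)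

lemma mulClass_of_residue_eq_zero {s : V} {e : ℤ} (he : residue c s e = 0)
    (q : NormalClass Γ c) : mulClass Γ c s e q = q := by
  induction q using Quotient.inductionOn with
  | h u => exact Quotient.sound (mulLetter_of_residue_eq_zero he u.2)

lemma mulClass_comm_of_adj {s t : V} (h : Γ.Adj s t) (e f : ℤ) (q : NormalClass Γ c) :
    mulClass Γ c s e (mulClass Γ c t f q) = mulClass Γ c t f (mulClass Γ c s e q) := by
  induction q using Quotient.inductionOn with
  | h u => exact Quotient.sound (mulLetter_comm_of_adj h e f u.1)

variable (Γ c)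

def vertexPerm (s : V) : Multiplicative ℤ →* Equiv.Perm (NormalClass Γ c) where
  toFun e :=
    { toFun := mulClass Γ c s e.toAdd
      invFun := mulClass Γ c s (-e.toAdd)
      left_inv q := by rw [mulClass_mulClass, neg_add_cancel, mulClass_of_residue_eq_zero (by simp)]
      right_inv q := by
        rw [mulClass_mulClass, add_neg_cancel, mulClass_of_residue_eq_zero (by simp)] }
  map_one' := Equiv.ext (mulClass_of_residue_eq_zero (by simp))
  map_mul' e f := Equiv.ext fun q => (mulClass_mulClass s e.toAdd f.toAdd q).symm

lemma vertexPerm_apply_mk (s : V) (e : ℤ) (u : NormalWord Γ c) :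
    vertexPerm Γ c s (.ofAdd e) ⟦u⟧ = ⟦⟨mulLetter Γ c s e u.1, isNormal_mulLetter s e u.2⟩⟧ :=
  rfl

lemma vertexPerm_commute_of_adj {s t : V} (h : Γ.Adj s t) (e f : Multiplicative ℤ) :
    Commute (vertexPerm Γ c s e) (vertexPerm Γ c t f) :=
  Equiv.ext (mulClass_comm_of_adj h e.toAdd f.toAdd)

def toPerm : GraphProduct Γ c →* Equiv.Perm (NormalClass Γ c) :=
  PresentedGroup.toGroup (f := fun s => vertexPerm Γ c s (.ofAdd 1)) <| by
    rintro r (⟨s, n, hs, rfl⟩ | ⟨s, t, h, rfl⟩)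
    · rw [map_pow, FreeGroup.lift_apply_of, ← map_pow, ← ofAdd_nsmul]
      refine Equiv.ext (mulClass_of_residue_eq_zero ?_)
      rw [residue, ZMod.intCast_zmod_eq_zero_iff_dvd, hs]
      simp
    · simp only [map_mul, map_inv, FreeGroup.lift_apply_of]
      rw [← commutatorElement_def, commutatorElement_eq_one_iff_commute]
      exact vertexPerm_commute_of_adj Γ c h _ _

variable {Γ c}

lemma toPerm_gpGen_zpow (s : V) (e : ℤ) :
    toPerm Γ c (gpGen Γ c s ^ e) = vertexPerm Γ c s (.ofAdd e) := by
  rw [map_zpow, gpGen, toPerm, PresentedGroup.toGroup.of, ← map_zpow, ← ofAdd_zsmul, zsmul_one,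
    Int.cast_id]

lemma toPerm_wordProd_nil {w : List (V × ℤ)} (hw : IsNormal Γ c w) :
    toPerm Γ c (wordProd Γ c w) ⟦⟨[], trivial⟩⟧ = ⟦⟨w, hw⟩⟧ := by
  induction w with
  | nil => rfl
  | cons x w ih =>
    obtain ⟨s, e⟩ := x
    obtain ⟨he, hb, hw'⟩ := hw
    rw [wordProd_cons, map_mul, Equiv.Perm.mul_apply, ih hw', toPerm_gpGen_zpow,
      vertexPerm_apply_mk]
    refine Quotient.sound ((mulLetter_eqvGen_prepend e hb).trans _ _ _ ?_)
    rw [prepend, if_neg he]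
    exact .refl _

end Action

end GraphProduct

namespace GPReduced

open GraphProduct

variable {V : Type*} {Γ : SimpleGraph V} {c : V → ℕ∞}

lemma residue_ne_zero {w₁ w₂ : List (V × ℤ)} {s : V} {e : ℤ}
    (hw : GPReduced Γ c (w₁ ++ (s, e) :: w₂)) : residue c s e ≠ 0 := fun h => by
  simpa using hw _ (.single (.del w₁ w₂ s e (gpGen_zpow_eq_one Γ c h)))

lemma of_swap {w₁ w₂ : List (V × ℤ)} {s t : V} {a b : ℤ}
    (hw : GPReduced Γ c (w₁ ++ (s, a) :: (t, b) :: w₂)) (h : Γ.Adj s t) :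
    GPReduced Γ c (w₁ ++ (t, b) :: (s, a) :: w₂) := fun w' hw' => by
  simpa using hw w' (.head (.swap w₁ w₂ s t a b h) hw')

lemma blocked {w₁ w₂ : List (V × ℤ)} {s : V} {e : ℤ}
    (hw : GPReduced Γ c (w₁ ++ (s, e) :: w₂)) : Blocked Γ s w₂ := by
  induction w₂ generalizing w₁ with
  | nil => trivial
  | cons x w₂ ih =>
    obtain ⟨t, f⟩ := x
    refine ⟨?_, fun h => ih (w₁ := w₁ ++ [(t, f)]) (by simpa using hw.of_swap h)⟩
    rintro rfl
    simpa using hw _ (.single (.merge w₁ w₂ t e f))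

lemma isNormal {w₁ w₂ : List (V × ℤ)} (hw : GPReduced Γ c (w₁ ++ w₂)) : IsNormal Γ c w₂ := by
  induction w₂ generalizing w₁ with
  | nil => trivial
  | cons x w₂ ih =>
    exact ⟨hw.residue_ne_zero, hw.blocked, ih (w₁ := w₁ ++ [x]) (by simpa using hw)⟩

end GPReduced

theorem reduced_word_eq_one_iff_nil_general {V : Type*}
    (Γ : SimpleGraph V) (c : V → ℕ∞) (w : List (V × ℤ)) (hw : GPReduced Γ c w) :
    wordProd Γ c w = 1 ↔ w = [] := by
  classical
  refine ⟨fun h => ?_, fun h => h ▸ rfl⟩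
  have hnormal : GraphProduct.IsNormal Γ c w := GPReduced.isNormal (w₁ := []) hw
  have hclass := GraphProduct.toPerm_wordProd_nil hnormal
  rw [h, map_one, Equiv.Perm.one_apply] at hclass
  have hlength := GraphProduct.eqvGen_step_length_eq (Quotient.exact hclass)
  exact List.eq_nil_of_length_eq_zero hlength.symm

/-- a reduced word represents the identity if and only if it is empty. -/
theorem reduced_word_eq_one_iff_nil {V : Type*} [Fintype V] [DecidableEq V]
    (Γ : SimpleGraph V) (c : V → ℕ∞) (w : List (V × ℤ)) (hw : GPReduced Γ c w) :
    wordProd Γ c w = 1 ↔ w = [] :=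
  reduced_word_eq_one_iff_nil_general Γ c w hw
end

section
/- The map β : G(Γ) → G(Γ'') defined on generators by β(s) = s for s ∈ V_fin and β(s) = (s,1)·(s,0) for s ∈ V_inf is a well-defined group homomorphism. -/
open Pointwise

/-- The vertices of `Γ` with finite label. -/
def Vfin {V : Type*} (c : V → ℕ∞) := {s : V // c s ≠ ⊤}

/-- The vertices of `Γ` with infinite label. -/
def Vinf {V : Type*} (c : V → ℕ∞) := {s : V // c s = ⊤}

/-- Vertex set of the Davis–Januszkiewicz graph `Γ''`: `V_fin ∪ (V_inf × {0,1})`,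
where `true` encodes `1` and `false` encodes `0`. -/
def DJVert {V : Type*} (c : V → ℕ∞) := Vfin c ⊕ (Vinf c × Bool)

/-- The graph `Γ''`: the subgraph on `V_fin ∪ (V_inf × {1})` is a copy of `Γ`, and
each `(v,0)` is joined to every other vertex except `(v,1)`. -/
def DJGraph {V : Type*} (Γ : SimpleGraph V) (c : V → ℕ∞) : SimpleGraph (DJVert c) :=
  SimpleGraph.fromRel (fun x y =>
    match x, y with
    | Sum.inl s, Sum.inl t => Γ.Adj s.1 t.1
    | Sum.inl s, Sum.inr (t, b) => if b then Γ.Adj s.1 t.1 else True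
    | Sum.inr (t, b), Sum.inl s => if b then Γ.Adj s.1 t.1 else True
    | Sum.inr (s, a), Sum.inr (t, b) =>
        if a = true ∧ b = true then Γ.Adj s.1 t.1 else s.1 ≠ t.1)

/-- Labels of `Γ''`: vertices of `V_fin` keep their label, the new vertices are
labeled `2`. -/
def DJLabel {V : Type*} (c : V → ℕ∞) : DJVert c → ℕ∞
  | Sum.inl s => c s.1
  | Sum.inr _ => 2

/-- The graph product `G(Γ'')`. -/
abbrev GPdj {V : Type*} (Γ : SimpleGraph V) (c : V → ℕ∞) : Type _ :=
  GraphProduct (DJGraph Γ c) (DJLabel c)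

/-- The generator of `G(Γ'')` corresponding to `s ∈ V_fin`. -/
def genFin {V : Type*} (Γ : SimpleGraph V) (c : V → ℕ∞) (s : Vfin c) : GPdj Γ c :=
  gpGen (DJGraph Γ c) (DJLabel c) (Sum.inl s)

/-- The generator of `G(Γ'')` corresponding to `(s,1)`, `s ∈ V_inf`. -/
def genA {V : Type*} (Γ : SimpleGraph V) (c : V → ℕ∞) (s : Vinf c) : GPdj Γ c :=
  gpGen (DJGraph Γ c) (DJLabel c) (Sum.inr (s, true))

/-- The generator of `G(Γ'')` corresponding to `(s,0)`, `s ∈ V_inf`. -/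
def genR {V : Type*} (Γ : SimpleGraph V) (c : V → ℕ∞) (s : Vinf c) : GPdj Γ c :=
  gpGen (DJGraph Γ c) (DJLabel c) (Sum.inr (s, false))

/-- `φ` is the homomorphism `β`, determined by `β(s) = s` for `s ∈ V_fin` and
`β(s) = (s,1)·(s,0)` for `s ∈ V_inf`. -/
def BetaSpec {V : Type*} (Γ : SimpleGraph V) (c : V → ℕ∞)
    (φ : GraphProduct Γ c →* GPdj Γ c) : Prop :=
  (∀ (s : V) (h : c s ≠ ⊤), φ (gpGen Γ c s) = genFin Γ c ⟨s, h⟩) ∧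
  (∀ (s : V) (h : c s = ⊤), φ (gpGen Γ c s) = genA Γ c ⟨s, h⟩ * genR Γ c ⟨s, h⟩)

/-- The subgroup `E` of `G(Γ'')` generated by the elements `(s,0)`, `s ∈ V_inf`. -/
def Esub {V : Type*} (Γ : SimpleGraph V) (c : V → ℕ∞) : Subgroup (GPdj Γ c) :=
  Subgroup.closure (Set.range (genR Γ c))

/-! By the universal property of the presentation it suffices to check the defining relations
on the proposed images. A generator with finite label is sent to a generator of `G(Γ'')` with
the same label. For adjacent `s, t`, the letters `s`, `(s,1)` commute with `t`, `(t,1)` because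
`Γ''` contains a copy of `Γ`, and `(s,0)` is adjacent to every vertex other than `(s,1)`. -/

namespace GraphProduct

variable {V : Type*} {Γ : SimpleGraph V} {c : V → ℕ∞}

lemma gpGen_pow_eq_one {s : V} {n : ℕ} (h : c s = n) : gpGen Γ c s ^ n = 1 :=
  (QuotientGroup.eq_one_iff _).mpr <|
    Subgroup.subset_normalClosure (Or.inl ⟨s, n, h, rfl⟩)

lemma gpGen_commute {s t : V} (h : Γ.Adj s t) : Commute (gpGen Γ c s) (gpGen Γ c t) := by
  have hrel : gpGen Γ c s * gpGen Γ c t * (gpGen Γ c s)⁻¹ * (gpGen Γ c t)⁻¹ = 1 :=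
    (QuotientGroup.eq_one_iff _).mpr <|
      Subgroup.subset_normalClosure (Or.inr ⟨s, t, h, rfl⟩)
  exact commutatorElement_eq_one_iff_commute.mp hrel

variable {H : Type*} [Group H] (f : V → H)
  (hpow : ∀ (s : V) (n : ℕ), c s = n → f s ^ n = 1)
  (hcomm : ∀ s t, Γ.Adj s t → Commute (f s) (f t))

def lift : GraphProduct Γ c →* H :=
  PresentedGroup.toGroup (f := f) <| by
    rintro r (⟨s, n, hs, rfl⟩ | ⟨s, t, hst, rfl⟩)
    · rw [map_pow, FreeGroup.lift_apply_of, hpow s n hs]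
    · simp only [map_mul, map_inv, FreeGroup.lift_apply_of, (hcomm s t hst).eq]
      group

@[simp]
lemma lift_gpGen (s : V) : lift f hpow hcomm (gpGen Γ c s) = f s :=
  PresentedGroup.toGroup.of _

end GraphProduct

section DavisJanuszkiewicz

open GraphProduct

variable {V : Type*} {Γ : SimpleGraph V} {c : V → ℕ∞}

lemma commute_genFin_genFin {s t : Vfin c} (h : Γ.Adj s.1 t.1) :
    Commute (genFin Γ c s) (genFin Γ c t) :=
  gpGen_commute ⟨fun e => h.ne (congrArg Subtype.val (Sum.inl_injective e)), Or.inl h⟩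

lemma commute_genFin_genA {s : Vfin c} {t : Vinf c} (h : Γ.Adj s.1 t.1) :
    Commute (genFin Γ c s) (genA Γ c t) :=
  gpGen_commute ⟨Sum.inl_ne_inr, Or.inl h⟩

lemma commute_genFin_genR (s : Vfin c) (t : Vinf c) :
    Commute (genFin Γ c s) (genR Γ c t) :=
  gpGen_commute ⟨Sum.inl_ne_inr, Or.inl trivial⟩

lemma commute_genA_genA {s t : Vinf c} (h : Γ.Adj s.1 t.1) :
    Commute (genA Γ c s) (genA Γ c t) :=
  gpGen_commute ⟨fun e => h.ne (congrArg (·.1.1) (Sum.inr_injective e)), Or.inl h⟩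

lemma commute_genA_genR {s t : Vinf c} (h : s.1 ≠ t.1) :
    Commute (genA Γ c s) (genR Γ c t) :=
  gpGen_commute ⟨fun e => Bool.noConfusion (congrArg (·.2) (Sum.inr_injective e)), Or.inl h⟩

lemma commute_genR_genR {s t : Vinf c} (h : s.1 ≠ t.1) :
    Commute (genR Γ c s) (genR Γ c t) :=
  gpGen_commute ⟨fun e => h (congrArg (·.1.1) (Sum.inr_injective e)), Or.inl h⟩

end DavisJanuszkiewicz

section Beta

open GraphProduct

variable {V : Type*} (Γ : SimpleGraph V) (c : V → ℕ∞)

def betaGen (s : V) : GPdj Γ c :=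
  if h : c s = ⊤ then genA Γ c ⟨s, h⟩ * genR Γ c ⟨s, h⟩ else genFin Γ c ⟨s, h⟩

variable {Γ c}

lemma betaGen_of_ne_top {s : V} (h : c s ≠ ⊤) : betaGen Γ c s = genFin Γ c ⟨s, h⟩ :=
  dif_neg h

lemma betaGen_of_eq_top {s : V} (h : c s = ⊤) :
    betaGen Γ c s = genA Γ c ⟨s, h⟩ * genR Γ c ⟨s, h⟩ :=
  dif_pos h

lemma betaGen_pow_eq_one {s : V} {n : ℕ} (h : c s = n) : betaGen Γ c s ^ n = 1 := by
  have hs : c s ≠ ⊤ := h ▸ ENat.natCast_ne_top n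
  rw [betaGen_of_ne_top hs]
  exact gpGen_pow_eq_one h

lemma commute_betaGen {s t : V} (h : Γ.Adj s t) : Commute (betaGen Γ c s) (betaGen Γ c t) := by
  by_cases hs : c s = ⊤ <;> by_cases ht : c t = ⊤
  · rw [betaGen_of_eq_top hs, betaGen_of_eq_top ht]
    exact ((commute_genA_genA h).mul_right (commute_genA_genR h.ne)).mul_left
      ((commute_genA_genR h.ne.symm).symm.mul_right (commute_genR_genR h.ne))
  · rw [betaGen_of_eq_top hs, betaGen_of_ne_top ht]
    exact ((commute_genFin_genA h.symm).mul_right (commute_genFin_genR _ _)).symm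
  · rw [betaGen_of_ne_top hs, betaGen_of_eq_top ht]
    exact (commute_genFin_genA h).mul_right (commute_genFin_genR _ _)
  · rw [betaGen_of_ne_top hs, betaGen_of_ne_top ht]
    exact commute_genFin_genFin h

end Beta

theorem beta_exists_general {V : Type*}
    (Γ : SimpleGraph V) (c : V → ℕ∞) :
    ∃ φ : GraphProduct Γ c →* GPdj Γ c, BetaSpec Γ c φ :=
  ⟨GraphProduct.lift (betaGen Γ c) (fun _ _ => betaGen_pow_eq_one) (fun _ _ => commute_betaGen),
    fun _ h => (GraphProduct.lift_gpGen ..).trans (betaGen_of_ne_top h),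
    fun _ h => (GraphProduct.lift_gpGen ..).trans (betaGen_of_eq_top h)⟩

/-- the map `β` with `β(s) = s` for `s ∈ V_fin` and
`β(s) = (s,1)·(s,0)` for `s ∈ V_inf` is a well-defined homomorphism
`G(Γ) → G(Γ'')`. -/
theorem beta_exists {V : Type*} [Fintype V] [DecidableEq V]
    (Γ : SimpleGraph V) (c : V → ℕ∞) :
    ∃ φ : GraphProduct Γ c →* GPdj Γ c, BetaSpec Γ c φ :=
  beta_exists_general Γ c
end

section
/- The subgroup E of G(Γ'') generated by {(s,0) : s ∈ V_inf} is finite; indeed E is isomorphic to (ℤ/2ℤ)^{V_inf}. Consequently β(G(Γ)) has finite index 2^{#V_inf} in G(Γ''). -/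
open Pointwise

/-! The parity homomorphism `π = djParity : G(Γ'') → (ℤ/2)^{V_inf}` sends both `(s,0)` and
`(s,1)` to the `s`-th basis vector and kills `V_fin`. The `(s,0)` are pairwise commuting
involutions, so `s ↦ (s,0)` extends to a homomorphism `σ = involutionsPiHom` from
`(ℤ/2)^{V_inf}` onto `E` with `π ∘ σ = id`; hence `E ≅ (ℤ/2)^{V_inf}`. Conjugation by `(s,0)`
fixes every generator of `β(G(Γ))` except `β(s) = (s,1)(s,0)`, which it inverts, so `β(G(Γ))`
is normal; it lies in `ker π`, and together with `E` it generates `G(Γ'')`. Since `π` is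
injective on `E`, `β(G(Γ)) = ker π`, whose index is `2^{#V_inf}`. -/

section ZModPow

variable {G : Type*} [Group G]

def zmodPowHom (n : ℕ) [NeZero n] (g : G) (hg : g ^ n = 1) : Multiplicative (ZMod n) →* G where
  toFun x := g ^ x.toAdd.val
  map_one' := by simp
  map_mul' x y := by
    simp only [toAdd_mul, ZMod.val_add, ← pow_eq_pow_mod _ hg, pow_add]

lemma zmodPowHom_apply (n : ℕ) [NeZero n] (g : G) (hg : g ^ n = 1) (x : Multiplicative (ZMod n)) :
    zmodPowHom n g hg x = g ^ x.toAdd.val :=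
  rfl

lemma zmodPowHom_ofAdd_one (n : ℕ) [NeZero n] (g : G) (hg : g ^ n = 1) :
    zmodPowHom n g hg (.ofAdd 1) = g := by
  rw [zmodPowHom_apply, toAdd_ofAdd, ZMod.val_one_eq_one_mod, ← pow_eq_pow_mod _ hg, pow_one]

end ZModPow

section CommutingInvolutions

variable {G ι : Type*} [Group G] [Fintype ι] [DecidableEq ι]
  (r : ι → G) (hr : ∀ i, r i ^ 2 = 1) (hcomm : Pairwise fun i j => Commute (r i) (r j))
  {π : G →* (ι → Multiplicative (ZMod 2))}

def involutionsPiHom : (ι → Multiplicative (ZMod 2)) →* G :=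
  MonoidHom.noncommPiCoprod (fun i => zmodPowHom 2 (r i) (hr i))
    (by intro i j hij x y; exact (hcomm hij).pow_pow _ _)

lemma involutionsPiHom_mulSingle (i : ι) (x : Multiplicative (ZMod 2)) :
    involutionsPiHom r hr hcomm (Pi.mulSingle i x) = r i ^ x.toAdd.val :=
  MonoidHom.noncommPiCoprod_mulSingle _ _ _

lemma range_involutionsPiHom :
    (involutionsPiHom r hr hcomm).range = Subgroup.closure (Set.range r) := by
  refine le_antisymm ?_ ((Subgroup.closure_le _).mpr ?_)
  · refine (MonoidHom.noncommPiCoprod_range (fun i => zmodPowHom 2 (r i) (hr i))).le.trans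
      (iSup_le fun i => ?_)
    rintro _ ⟨x, rfl⟩
    exact pow_mem (Subgroup.subset_closure (Set.mem_range_self i)) _
  · rintro _ ⟨i, rfl⟩
    exact ⟨Pi.mulSingle i (.ofAdd 1),
      (involutionsPiHom_mulSingle r hr hcomm i _).trans (zmodPowHom_ofAdd_one 2 (r i) (hr i))⟩

lemma comp_involutionsPiHom (hπ : ∀ i, π (r i) = Pi.mulSingle i (.ofAdd 1)) :
    π.comp (involutionsPiHom r hr hcomm) = MonoidHom.id _ := by
  have ofAdd_one_pow_val :
      ∀ x : Multiplicative (ZMod 2), Multiplicative.ofAdd 1 ^ x.toAdd.val = x := by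
    decide
  refine MonoidHom.functions_ext _ _ _ fun i x => ?_
  simp only [MonoidHom.comp_apply, involutionsPiHom_mulSingle, map_pow, hπ, ← Pi.mulSingle_pow,
    ofAdd_one_pow_val, MonoidHom.id_apply]

lemma involutionsPiHom_injective (hπ : ∀ i, π (r i) = Pi.mulSingle i (.ofAdd 1)) :
    Function.Injective (involutionsPiHom r hr hcomm) :=
  Function.LeftInverse.injective (g := π) <|
    DFunLike.congr_fun (comp_involutionsPiHom r hr hcomm hπ)

noncomputable def closureInvolutionsEquiv (hπ : ∀ i, π (r i) = Pi.mulSingle i (.ofAdd 1)) :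
    Subgroup.closure (Set.range r) ≃* (ι → Multiplicative (ZMod 2)) :=
  (MulEquiv.subgroupCongr (range_involutionsPiHom r hr hcomm).symm).trans
    (MonoidHom.ofInjective (involutionsPiHom_injective r hr hcomm hπ)).symm

lemma closureInvolutionsEquiv_apply (hπ : ∀ i, π (r i) = Pi.mulSingle i (.ofAdd 1))
    (g : Subgroup.closure (Set.range r)) : closureInvolutionsEquiv r hr hcomm hπ g = π g := by
  obtain ⟨x, hx⟩ := (range_involutionsPiHom r hr hcomm).ge g.2
  have hπx : π (involutionsPiHom r hr hcomm x) = x :=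
    DFunLike.congr_fun (comp_involutionsPiHom r hr hcomm hπ) x
  rw [closureInvolutionsEquiv, MulEquiv.trans_apply, MulEquiv.symm_apply_eq]
  ext1
  simp [← hx, hπx, MonoidHom.ofInjective_apply]

end CommutingInvolutions

section Subgroup

variable {G : Type*} [Group G] {H K : Subgroup G}

lemma Subgroup.mem_normalizer_of_conj_mem_of_inv_eq {g : G} (hg : g⁻¹ = g)
    (h : ∀ x ∈ H, g * x * g⁻¹ ∈ H) : g ∈ Subgroup.normalizer (H : Set G) := by
  refine Subgroup.mem_normalizer_iff.mpr fun x => ⟨h x, fun hx => ?_⟩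
  have hx' : x = g * (g * x * g⁻¹) * g⁻¹ :=
    calc x = g⁻¹ * (g * x * g⁻¹) * g := by group
      _ = g * (g * x * g⁻¹) * g⁻¹ := by rw [hg]
  exact hx' ▸ h _ hx

lemma Subgroup.normal_of_sup_eq_top_of_le_normalizer (hHK : H ⊔ K = ⊤)
    (hK : K ≤ Subgroup.normalizer (H : Set G)) : H.Normal := by
  rw [← Subgroup.normalizer_eq_top_iff, eq_top_iff, ← hHK]
  exact sup_le Subgroup.le_normalizer hK

end Subgroup

section GraphProduct

variable {V : Type*} (Γ : SimpleGraph V) (c : V → ℕ∞)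

lemma mk_eq_one_of_mem_graphProductRels {r : FreeGroup V} (hr : r ∈ graphProductRels Γ c) :
    PresentedGroup.mk (graphProductRels Γ c) r = 1 :=
  (QuotientGroup.eq_one_iff _).mpr (Subgroup.subset_normalClosure hr)

lemma gpGen_pow_eq_one {s : V} {n : ℕ} (h : c s = n) : gpGen Γ c s ^ n = 1 := by
  simpa [gpGen, PresentedGroup.of] using
    mk_eq_one_of_mem_graphProductRels Γ c (Or.inl ⟨s, n, h, rfl⟩)

lemma gpGen_commute {s t : V} (h : Γ.Adj s t) : Commute (gpGen Γ c s) (gpGen Γ c t) := by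
  refine commutatorElement_eq_one_iff_commute.mp ?_
  simpa [commutatorElement_def, gpGen, PresentedGroup.of] using
    mk_eq_one_of_mem_graphProductRels Γ c (Or.inr ⟨s, t, h, rfl⟩)

def gpLiftOfCommGroup {H : Type*} [CommGroup H] (f : V → H)
    (hf : ∀ s (n : ℕ), c s = n → f s ^ n = 1) : GraphProduct Γ c →* H :=
  PresentedGroup.toGroup (f := f) <| by
    rintro r (⟨s, n, hn, rfl⟩ | ⟨s, t, -, rfl⟩)
    · simpa using hf s n hn
    · simp

@[simp]
lemma gpLiftOfCommGroup_gpGen {H : Type*} [CommGroup H] (f : V → H)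
    (hf : ∀ s (n : ℕ), c s = n → f s ^ n = 1) (s : V) :
    gpLiftOfCommGroup Γ c f hf (gpGen Γ c s) = f s :=
  PresentedGroup.toGroup.of _

end GraphProduct

section DavisJanuszkiewicz

variable {V : Type*} (Γ : SimpleGraph V) (c : V → ℕ∞)

instance [Finite V] : Finite (Vinf c) := Subtype.finite

lemma genR_sq (s : Vinf c) : genR Γ c s ^ 2 = 1 :=
  gpGen_pow_eq_one _ _ rfl

lemma genR_inv (s : Vinf c) : (genR Γ c s)⁻¹ = genR Γ c s :=
  inv_eq_of_mul_eq_one_left ((sq _).symm.trans (genR_sq Γ c s))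

lemma genA_inv (s : Vinf c) : (genA Γ c s)⁻¹ = genA Γ c s :=
  inv_eq_of_mul_eq_one_left ((sq _).symm.trans (gpGen_pow_eq_one _ _ rfl))

lemma djGraph_adj_inr_false_inl (s : Vinf c) (t : Vfin c) :
    (DJGraph Γ c).Adj (.inr (s, false)) (.inl t) :=
  (SimpleGraph.fromRel_adj ..).mpr ⟨Sum.inr_ne_inl, Or.inl trivial⟩

lemma djGraph_adj_inr_false_inr {s t : Vinf c} (b : Bool) (h : s ≠ t) :
    (DJGraph Γ c).Adj (.inr (s, false)) (.inr (t, b)) := by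
  refine (SimpleGraph.fromRel_adj ..).mpr
    ⟨fun heq => h (congrArg Prod.fst (Sum.inr_injective heq)), Or.inl ?_⟩
  simpa using Subtype.coe_ne_coe.mpr h

lemma genR_commute_genFin (s : Vinf c) (t : Vfin c) : Commute (genR Γ c s) (genFin Γ c t) :=
  gpGen_commute _ _ (djGraph_adj_inr_false_inl Γ c s t)

lemma genR_commute_genA {s t : Vinf c} (h : s ≠ t) : Commute (genR Γ c s) (genA Γ c t) :=
  gpGen_commute _ _ (djGraph_adj_inr_false_inr Γ c true h)

lemma genR_commute_genR {s t : Vinf c} (h : s ≠ t) : Commute (genR Γ c s) (genR Γ c t) :=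
  gpGen_commute _ _ (djGraph_adj_inr_false_inr Γ c false h)

variable [DecidableEq (Vinf c)]

def djParityGen : DJVert c → Vinf c → Multiplicative (ZMod 2)
  | .inl _ => 1
  | .inr (s, _) => Pi.mulSingle s (.ofAdd 1)

def djParity : GPdj Γ c →* (Vinf c → Multiplicative (ZMod 2)) :=
  gpLiftOfCommGroup _ _ (djParityGen c) <| by
    rintro (t | ⟨s, b⟩) n hn
    · simp [djParityGen]
    · obtain rfl : n = 2 := Nat.cast_injective (R := ℕ∞) hn.symm
      rw [djParityGen, ← Pi.mulSingle_pow]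
      exact Pi.mulSingle_eq_one_iff.mpr (by decide)

@[simp]
lemma djParity_genFin (t : Vfin c) : djParity Γ c (genFin Γ c t) = 1 :=
  gpLiftOfCommGroup_gpGen ..

@[simp]
lemma djParity_genA (s : Vinf c) : djParity Γ c (genA Γ c s) = Pi.mulSingle s (.ofAdd 1) :=
  gpLiftOfCommGroup_gpGen ..

@[simp]
lemma djParity_genR (s : Vinf c) : djParity Γ c (genR Γ c s) = Pi.mulSingle s (.ofAdd 1) :=
  gpLiftOfCommGroup_gpGen ..

noncomputable def esubEquiv [Fintype (Vinf c)] :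
    Esub Γ c ≃* (Vinf c → Multiplicative (ZMod 2)) :=
  closureInvolutionsEquiv (genR Γ c) (genR_sq Γ c) (fun _ _ => genR_commute_genR Γ c)
    (djParity_genR Γ c)

lemma esubEquiv_apply [Fintype (Vinf c)] (e : Esub Γ c) : esubEquiv Γ c e = djParity Γ c e :=
  closureInvolutionsEquiv_apply ..

lemma djParity_surjective [Fintype (Vinf c)] : Function.Surjective (djParity Γ c) :=
  Function.RightInverse.surjective <| DFunLike.congr_fun <|
    comp_involutionsPiHom (genR Γ c) (genR_sq Γ c) (fun _ _ => genR_commute_genR Γ c)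
      (djParity_genR Γ c)

end DavisJanuszkiewicz

section Beta

variable {V : Type*} {Γ : SimpleGraph V} {c : V → ℕ∞} {φ : GraphProduct Γ c →* GPdj Γ c}

lemma genR_conj_genA_mul_genR (s : Vinf c) :
    genR Γ c s * (genA Γ c s * genR Γ c s) * (genR Γ c s)⁻¹ =
      (genA Γ c s * genR Γ c s)⁻¹ := by
  rw [← mul_assoc, mul_inv_cancel_right, mul_inv_rev, genR_inv, genA_inv]

lemma BetaSpec.apply_gpGen_fin (hφ : BetaSpec Γ c φ) (t : Vfin c) :
    φ (gpGen Γ c t.1) = genFin Γ c t :=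
  hφ.1 t.1 t.2

lemma BetaSpec.apply_gpGen_inf (hφ : BetaSpec Γ c φ) (s : Vinf c) :
    φ (gpGen Γ c s.1) = genA Γ c s * genR Γ c s :=
  hφ.2 s.1 s.2

lemma exists_vfin_or_vinf (v : V) : (∃ t : Vfin c, t.1 = v) ∨ ∃ s : Vinf c, s.1 = v := by
  by_cases hv : c v = ⊤
  exacts [.inr ⟨⟨v, hv⟩, rfl⟩, .inl ⟨⟨v, hv⟩, rfl⟩]

lemma BetaSpec.genR_conj_mem_range (hφ : BetaSpec Γ c φ) (s : Vinf c) {x : GPdj Γ c}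
    (hx : x ∈ φ.range) : genR Γ c s * x * (genR Γ c s)⁻¹ ∈ φ.range := by
  obtain ⟨g, rfl⟩ := hx
  refine PresentedGroup.generated_by _
    (φ.range.comap ((MulAut.conj (genR Γ c s)).toMonoidHom.comp φ)) (fun v => ?_) g
  change genR Γ c s * φ (gpGen Γ c v) * (genR Γ c s)⁻¹ ∈ φ.range
  obtain ⟨t, rfl⟩ | ⟨t, rfl⟩ := exists_vfin_or_vinf (c := c) v
  · rw [hφ.apply_gpGen_fin, (genR_commute_genFin Γ c s t).eq, mul_inv_cancel_right]
    exact ⟨_, hφ.apply_gpGen_fin t⟩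
  · rw [hφ.apply_gpGen_inf]
    rcases eq_or_ne s t with rfl | hst
    · rw [genR_conj_genA_mul_genR]
      exact inv_mem ⟨_, hφ.apply_gpGen_inf s⟩
    · rw [((genR_commute_genA Γ c hst).mul_right (genR_commute_genR Γ c hst)).eq,
        mul_inv_cancel_right]
      exact ⟨_, hφ.apply_gpGen_inf t⟩

lemma BetaSpec.esub_le_normalizer (hφ : BetaSpec Γ c φ) :
    Esub Γ c ≤ Subgroup.normalizer (φ.range : Set (GPdj Γ c)) := by
  refine (Subgroup.closure_le _).mpr ?_
  rintro _ ⟨s, rfl⟩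
  exact Subgroup.mem_normalizer_of_conj_mem_of_inv_eq (genR_inv Γ c s)
    fun _ => hφ.genR_conj_mem_range s

lemma BetaSpec.range_sup_esub (hφ : BetaSpec Γ c φ) : φ.range ⊔ Esub Γ c = ⊤ := by
  have hR (s : Vinf c) : genR Γ c s ∈ φ.range ⊔ Esub Γ c :=
    Subgroup.mem_sup_right (Subgroup.subset_closure (Set.mem_range_self s))
  have hAR (s : Vinf c) : genA Γ c s * genR Γ c s ∈ φ.range ⊔ Esub Γ c :=
    Subgroup.mem_sup_left ⟨_, hφ.apply_gpGen_inf s⟩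
  rw [eq_top_iff, ← PresentedGroup.closure_range_of, Subgroup.closure_le]
  rintro _ ⟨t | ⟨s, _ | _⟩, rfl⟩
  · exact Subgroup.mem_sup_left ⟨_, hφ.apply_gpGen_fin t⟩
  · exact hR s
  · have := mul_mem (hAR s) (inv_mem (hR s))
    rwa [mul_inv_cancel_right] at this

lemma BetaSpec.range_normal (hφ : BetaSpec Γ c φ) : φ.range.Normal :=
  Subgroup.normal_of_sup_eq_top_of_le_normalizer hφ.range_sup_esub hφ.esub_le_normalizer

variable [DecidableEq (Vinf c)]

lemma BetaSpec.range_le_ker_djParity (hφ : BetaSpec Γ c φ) :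
    φ.range ≤ (djParity Γ c).ker := by
  rintro _ ⟨g, rfl⟩
  refine PresentedGroup.generated_by _ ((djParity Γ c).ker.comap φ) (fun v => ?_) g
  change djParity Γ c (φ (gpGen Γ c v)) = 1
  obtain ⟨t, rfl⟩ | ⟨s, rfl⟩ := exists_vfin_or_vinf (c := c) v
  · rw [hφ.apply_gpGen_fin, djParity_genFin]
  · rw [hφ.apply_gpGen_inf, map_mul, djParity_genA, djParity_genR, ← Pi.mulSingle_mul]
    exact Pi.mulSingle_eq_one_iff.mpr (by decide)

lemma BetaSpec.range_eq_ker_djParity [Fintype (Vinf c)] (hφ : BetaSpec Γ c φ) :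
    φ.range = (djParity Γ c).ker := by
  refine le_antisymm hφ.range_le_ker_djParity fun g hg => ?_
  have := hφ.range_normal
  obtain ⟨h, hh, e, he, rfl⟩ :=
    Subgroup.mem_sup_of_normal_left.mp (hφ.range_sup_esub ▸ Subgroup.mem_top g)
  have hπe : djParity Γ c e = 1 := by
    rwa [MonoidHom.mem_ker, map_mul, MonoidHom.mem_ker.mp (hφ.range_le_ker_djParity hh),
      one_mul] at hg
  have he1 : (⟨e, he⟩ : Esub Γ c) = 1 :=
    (esubEquiv Γ c).injective (by rw [esubEquiv_apply, map_one]; exact hπe)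
  rwa [show e = 1 from congrArg Subtype.val he1, mul_one]

lemma BetaSpec.index_range [Fintype (Vinf c)] (hφ : BetaSpec Γ c φ) :
    φ.range.index = 2 ^ Nat.card (Vinf c) := by
  rw [hφ.range_eq_ker_djParity, Subgroup.index_ker,
    MonoidHom.range_eq_top.mpr (djParity_surjective Γ c), Subgroup.card_top, Nat.card_fun]
  simp

end Beta

theorem Esub_finite_and_index_general {V : Type*} [Fintype V]
    (Γ : SimpleGraph V) (c : V → ℕ∞) :
    Finite (Esub Γ c) ∧
    Nonempty (Esub Γ c ≃* (Vinf c → Multiplicative (ZMod 2))) ∧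
    (∀ φ : GraphProduct Γ c →* GPdj Γ c, BetaSpec Γ c φ →
      φ.range.index = 2 ^ Nat.card (Vinf c)) := by
  classical
  have : Fintype (Vinf c) := Fintype.ofFinite _
  exact ⟨.of_equiv _ (esubEquiv Γ c).symm.toEquiv, ⟨esubEquiv Γ c⟩,
    fun _ hφ => hφ.index_range⟩

/-- the subgroup `E` generated by the `(s,0)`, `s ∈ V_inf`, is finite,
isomorphic to `(ℤ/2ℤ)^{V_inf}`; consequently the image of `β` has index
`2^{#V_inf}` in `G(Γ'')`. -/
theorem Esub_finite_and_index {V : Type*} [Fintype V] [DecidableEq V]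
    (Γ : SimpleGraph V) (c : V → ℕ∞) :
    Finite (Esub Γ c) ∧
    Nonempty (Esub Γ c ≃* (Vinf c → Multiplicative (ZMod 2))) ∧
    (∀ φ : GraphProduct Γ c →* GPdj Γ c, BetaSpec Γ c φ →
      φ.range.index = 2 ^ Nat.card (Vinf c)) :=
  Esub_finite_and_index_general Γ c
end
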